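/- Let A be a bounded linear operator on H. Then ber(A) ≤ (1/√2) · ber(|A| + i·|A*|), where i denotes the imaginary unit. -/

import Mathlib

set_option synthInstance.maxHeartbeats 1000000
set_option maxHeartbeats 1000000

open scoped NNReal
open ContinuousLinearMap

/-- The Berezin number of an operator `T`, relative to the family `k` of
(normalized reproducing kernel) vectors indexed by `Ω`. -/
noncomputable def ber {H : Type*} [NormedAddCommGroup H] [InnerProductSpace ℂ H]
    {Ω : Type*} (k : Ω → H) (T : H →L[ℂ] H) : ℝ :=
  ⨆ lam : Ω, ‖(inner ℂ (T (k lam)) (k lam) : ℂ)‖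

/-- The absolute value `|T| = (T*T)^(1/2)` of a bounded operator. -/
noncomputable def opAbs {H : Type*} [NormedAddCommGroup H] [InnerProductSpace ℂ H]
    [CompleteSpace H] (T : H →L[ℂ] H) : H →L[ℂ] H :=
  CFC.sqrt (adjoint T * T)

/-! The heart of the matter is Kato's mixed Schwarz inequality
`|⟨Ax, x⟩|² ≤ ⟨|A|x, x⟩ ⟨|A*|x, x⟩`; since `ab ≤ (a² + b²)/2 = |⟨(|A| + i|A*|)x, x⟩|² / 2`
for `a = ⟨|A|x, x⟩`, `b = ⟨|A*|x, x⟩`, the bound holds pointwise and passes to the suprema.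

The mixed Schwarz inequality is proved without polar decomposition. For `ε > 0` the operator
`R = (A*A + ε)^(1/2)` is invertible and `⟨Ax, x⟩ = ⟨Rx, R⁻¹A*x⟩`, so Cauchy–Schwarz for the positive
form of `R` bounds `|⟨Ax, x⟩|²` by `⟨Rx, x⟩ ⟨AR⁻¹A*x, x⟩`. Here `⟨Rx, x⟩ ≤ ⟨|A|x, x⟩ + √ε ‖x‖²`,
and `AR⁻¹A* ≤ |A*|` because its square `A (A*A (A*A + ε)⁻¹) A*` is at most `AA*` and the square
root is operator monotone. Finally let `ε → 0`. -/

open scoped InnerProductSpace Topology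
open Filter

section

variable {H : Type*} [NormedAddCommGroup H] [InnerProductSpace ℂ H]

lemma re_inner_le_re_inner_of_le {T S : H →L[ℂ] H} (h : T ≤ S) (x : H) :
    (⟪T x, x⟫_ℂ).re ≤ (⟪S x, x⟫_ℂ).re := by
  simpa [inner_sub_left] using h.re_inner_nonneg_left x

lemma re_inner_nonneg_of_nonneg {T : H →L[ℂ] H} (hT : 0 ≤ T) (x : H) : 0 ≤ (⟪T x, x⟫_ℂ).re := by
  simpa using re_inner_le_re_inner_of_le hT x

lemma ber_nonneg {Ω : Type*} (k : Ω → H) (T : H →L[ℂ] H) : 0 ≤ ber k T :=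
  Real.iSup_nonneg fun _ => norm_nonneg _

lemma norm_inner_le_ber {Ω : Type*} {k : Ω → H} (hk : ∀ lam, ‖k lam‖ ≤ 1) (T : H →L[ℂ] H)
    (lam : Ω) : ‖⟪T (k lam), k lam⟫_ℂ‖ ≤ ber k T := by
  refine le_ciSup (f := fun lam => ‖⟪T (k lam), k lam⟫_ℂ‖)
    ⟨‖T‖, Set.forall_mem_range.2 fun μ => ?_⟩ lam
  calc ‖⟪T (k μ), k μ⟫_ℂ‖ ≤ ‖T‖ * ‖k μ‖ * ‖k μ‖ := by
        grw [norm_inner_le_norm, T.le_opNorm]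
    _ ≤ ‖T‖ * 1 * 1 := by gcongr <;> exact hk μ
    _ = ‖T‖ := by ring

variable [CompleteSpace H]

lemma IsSelfAdjoint.ofReal_re_inner_self {T : H →L[ℂ] H} (hT : IsSelfAdjoint T) (x : H) :
    ((⟪T x, x⟫_ℂ).re : ℂ) = ⟪T x, x⟫_ℂ :=
  hT.isSymmetric.coe_reApplyInnerSelf_apply x

lemma sq_norm_inner_add_I_smul {P Q : H →L[ℂ] H} (hP : IsSelfAdjoint P) (hQ : IsSelfAdjoint Q)
    (x : H) : ‖⟪(P + Complex.I • Q) x, x⟫_ℂ‖ ^ 2 = (⟪P x, x⟫_ℂ).re ^ 2 + (⟪Q x, x⟫_ℂ).re ^ 2 := by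
  rw [add_apply, smul_apply, inner_add_left, inner_smul_left, ← hP.ofReal_re_inner_self,
    ← hQ.ofReal_re_inner_self, Complex.conj_I, neg_mul, mul_comm, ← neg_mul, ← Complex.ofReal_neg,
    Complex.sq_norm, Complex.normSq_add_mul_I, neg_sq, Complex.ofReal_re, Complex.ofReal_re]

lemma sq_norm_inner_le_of_nonneg {R : H →L[ℂ] H} (hR : 0 ≤ R) (y z : H) :
    ‖⟪R y, z⟫_ℂ‖ ^ 2 ≤ (⟪R y, y⟫_ℂ).re * (⟪R z, z⟫_ℂ).re := by
  set S := CFC.sqrt R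
  have hS : IsSelfAdjoint S := .of_nonneg (CFC.sqrt_nonneg R)
  have hR_eq : ∀ u v, ⟪R u, v⟫_ℂ = ⟪S u, S v⟫_ℂ := fun u v => by
    rw [← CFC.sqrt_mul_sqrt_self R, mul_apply_eq_comp, ← adjoint_inner_right, hS.adjoint_eq]
  have hre : ∀ u, (⟪R u, u⟫_ℂ).re = ‖S u‖ ^ 2 := fun u => by
    rw [hR_eq, ← RCLike.re_to_complex, inner_self_eq_norm_sq]
  rw [hR_eq, hre, hre, ← mul_pow]
  gcongr
  exact norm_inner_le_norm _ _

lemma mul_mul_adjoint_le_opAbs_adjoint (A : H →L[ℂ] H) {Q : H →L[ℂ] H} (hQ : 0 ≤ Q)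
    (hQA : Q * (adjoint A * A) * Q ≤ 1) : A * Q * adjoint A ≤ opAbs (adjoint A) := by
  have hD : 0 ≤ A * Q * adjoint A := by
    simpa [star_eq_adjoint] using star_right_conjugate_nonneg hQ A
  have hD_sq : (A * Q * adjoint A) ^ 2 ≤ A * adjoint A := by
    have := star_right_conjugate_le_conjugate hQA A
    simp only [star_eq_adjoint, mul_one] at this
    convert this using 1
    simp only [sq, mul_assoc]
  calc A * Q * adjoint A = CFC.sqrt ((A * Q * adjoint A) ^ 2) := (CFC.sqrt_sq _ hD).symm
    _ ≤ CFC.sqrt (A * adjoint A) := CFC.sqrt_le_sqrt _ _ hD_sq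
    _ = opAbs (adjoint A) := by rw [opAbs, adjoint_adjoint]

lemma sqrt_add_le_sqrt_add_sqrt {s t : ℝ} (hs : 0 ≤ s) (ht : 0 ≤ t) : √(s + t) ≤ √s + √t := by
  rw [Real.sqrt_le_iff]
  refine ⟨by positivity, ?_⟩
  nlinarith [Real.sq_sqrt hs, Real.sq_sqrt ht, Real.sqrt_nonneg s, Real.sqrt_nonneg t]

section Regularization

variable {B : H →L[ℂ] H} {ε : ℝ}

lemma sqrt_add_ne_zero_of_mem_spectrum (hB : 0 ≤ B) (hε : 0 < ε) {t : ℝ}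
    (ht : t ∈ spectrum ℝ B) : √(t + ε) ≠ 0 :=
  (Real.sqrt_pos.2 (by linarith [spectrum_nonneg_of_nonneg hB ht])).ne'

lemma continuousOn_inv_sqrt_add (hB : 0 ≤ B) (hε : 0 < ε) :
    ContinuousOn (fun t => (√(t + ε))⁻¹) (spectrum ℝ B) :=
  ContinuousOn.inv₀ (by fun_prop) fun _ ht => sqrt_add_ne_zero_of_mem_spectrum hB hε ht

lemma cfc_sqrt_add_mul_cfc_inv_sqrt_add (hB : 0 ≤ B) (hε : 0 < ε) :
    cfc (fun t => √(t + ε)) B * cfc (fun t => (√(t + ε))⁻¹) B = 1 := by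
  rw [← cfc_mul _ _ B (by fun_prop) (continuousOn_inv_sqrt_add hB hε), ← cfc_one ℝ B]
  exact cfc_congr fun t ht => mul_inv_cancel₀ (sqrt_add_ne_zero_of_mem_spectrum hB hε ht)

lemma cfc_inv_sqrt_add_mul_self_mul_le_one (hB : 0 ≤ B) (hε : 0 < ε) :
    cfc (fun t => (√(t + ε))⁻¹) B * B * cfc (fun t => (√(t + ε))⁻¹) B ≤ 1 := by
  have hcont := continuousOn_inv_sqrt_add hB hε
  calc _ = cfc (fun t => (√(t + ε))⁻¹ * t * (√(t + ε))⁻¹) B := by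
        rw [cfc_mul (fun t => (√(t + ε))⁻¹ * t) _ B (hcont.mul (continuousOn_id' _)) hcont,
          cfc_mul _ (fun t => t) B hcont (continuousOn_id' _), cfc_id' ℝ B]
    _ ≤ 1 := cfc_le_one _ _ fun t ht => ?_
  have hpos : 0 < t + ε := by linarith [spectrum_nonneg_of_nonneg hB ht]
  rw [mul_right_comm, ← mul_inv, Real.mul_self_sqrt hpos.le, inv_mul_le_iff₀ hpos, mul_one]
  linarith

lemma cfc_sqrt_add_le (hB : 0 ≤ B) (hε : 0 ≤ ε) :
    cfc (fun t => √(t + ε)) B ≤ CFC.sqrt B + algebraMap ℝ _ √ε := by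
  rw [CFC.sqrt_eq_real_sqrt _ hB, cfcₙ_eq_cfc, ← cfc_add_const ..]
  exact cfc_mono fun t ht => sqrt_add_le_sqrt_add_sqrt (spectrum_nonneg_of_nonneg hB ht) hε

end Regularization

lemma sq_norm_inner_le_of_mul_eq_one {R Q : H →L[ℂ] H} (hR : 0 ≤ R) (hQ : IsSelfAdjoint Q)
    (hRQ : R * Q = 1) (hQR : Q * R = 1) (A : H →L[ℂ] H) (x : H) :
    ‖⟪A x, x⟫_ℂ‖ ^ 2 ≤ (⟪R x, x⟫_ℂ).re * (⟪(A * Q * adjoint A) x, x⟫_ℂ).re := by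
  have hsplit : ⟪A x, x⟫_ℂ = ⟪R x, Q (adjoint A x)⟫_ℂ := by
    calc ⟪A x, x⟫_ℂ = ⟪A (Q (R x)), x⟫_ℂ := by rw [← mul_apply_eq_comp Q R, hQR, one_apply_eq_self]
      _ = ⟪R x, Q (adjoint A x)⟫_ℂ := by
        rw [← adjoint_inner_right]
        exact hQ.isSymmetric _ _
  have hconj : ⟪R (Q (adjoint A x)), Q (adjoint A x)⟫_ℂ = ⟪(A * Q * adjoint A) x, x⟫_ℂ := by
    calc ⟪R (Q (adjoint A x)), Q (adjoint A x)⟫_ℂ = ⟪adjoint A x, Q (adjoint A x)⟫_ℂ := by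
          rw [← mul_apply_eq_comp R Q, hRQ, one_apply_eq_self]
      _ = ⟪A (Q (adjoint A x)), x⟫_ℂ :=
          (hQ.isSymmetric _ _).symm.trans (adjoint_inner_right A _ x)
      _ = ⟪(A * Q * adjoint A) x, x⟫_ℂ := rfl
  simpa only [hsplit, hconj] using sq_norm_inner_le_of_nonneg hR x (Q (adjoint A x))

lemma sq_norm_inner_le_opAbs_add_sqrt_mul_opAbs_adjoint (A : H →L[ℂ] H) (x : H) {ε : ℝ}
    (hε : 0 < ε) :
    ‖⟪A x, x⟫_ℂ‖ ^ 2 ≤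
      ((⟪opAbs A x, x⟫_ℂ).re + √ε * ‖x‖ ^ 2) * (⟪opAbs (adjoint A) x, x⟫_ℂ).re := by
  have hB : 0 ≤ adjoint A * A := by simpa [star_eq_adjoint] using star_mul_self_nonneg A
  set R := cfc (fun t => √(t + ε)) (adjoint A * A)
  set Q := cfc (fun t => (√(t + ε))⁻¹) (adjoint A * A)
  have hRQ : R * Q = 1 := cfc_sqrt_add_mul_cfc_inv_sqrt_add hB hε
  have hQR : Q * R = 1 := (cfc_commute_cfc (R := ℝ) _ _ _).eq.trans hRQ
  have hR : 0 ≤ R := cfc_nonneg fun t _ => Real.sqrt_nonneg _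
  have hQ : 0 ≤ Q := cfc_nonneg fun t _ => inv_nonneg.2 (Real.sqrt_nonneg _)
  have hRx : (⟪R x, x⟫_ℂ).re ≤ (⟪opAbs A x, x⟫_ℂ).re + √ε * ‖x‖ ^ 2 := by
    have := re_inner_le_re_inner_of_le (cfc_sqrt_add_le hB hε.le) x
    simpa [opAbs, inner_add_left, Algebra.algebraMap_eq_smul_one, ← Complex.ofReal_pow] using this
  have hAQA : A * Q * adjoint A ≤ opAbs (adjoint A) :=
    mul_mul_adjoint_le_opAbs_adjoint A hQ (cfc_inv_sqrt_add_mul_self_mul_le_one hB hε)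
  calc ‖⟪A x, x⟫_ℂ‖ ^ 2 ≤ (⟪R x, x⟫_ℂ).re * (⟪(A * Q * adjoint A) x, x⟫_ℂ).re :=
        sq_norm_inner_le_of_mul_eq_one hR (.of_nonneg hQ) hRQ hQR A x
    _ ≤ _ := mul_le_mul hRx (re_inner_le_re_inner_of_le hAQA x)
          (re_inner_nonneg_of_nonneg (star_right_conjugate_nonneg hQ A) x)
          ((re_inner_nonneg_of_nonneg hR x).trans hRx)

lemma sq_norm_inner_le_opAbs_mul_opAbs_adjoint (A : H →L[ℂ] H) (x : H) :
    ‖⟪A x, x⟫_ℂ‖ ^ 2 ≤ (⟪opAbs A x, x⟫_ℂ).re * (⟪opAbs (adjoint A) x, x⟫_ℂ).re := by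
  set a := (⟪opAbs A x, x⟫_ℂ).re
  set b := (⟪opAbs (adjoint A) x, x⟫_ℂ).re
  have hcont : Continuous fun ε : ℝ => (a + √ε * ‖x‖ ^ 2) * b := by fun_prop
  have hlim : Tendsto (fun ε : ℝ => (a + √ε * ‖x‖ ^ 2) * b) (𝓝[>] 0) (𝓝 (a * b)) := by
    simpa using (hcont.tendsto 0).mono_left nhdsWithin_le_nhds
  exact ge_of_tendsto hlim <| eventually_nhdsWithin_of_forall fun _ hε =>
    sq_norm_inner_le_opAbs_add_sqrt_mul_opAbs_adjoint A x hε

lemma norm_inner_le_inv_sqrt_two_mul (A : H →L[ℂ] H) (x : H) :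
    ‖⟪A x, x⟫_ℂ‖ ≤ 1 / √2 * ‖⟪(opAbs A + Complex.I • opAbs (adjoint A)) x, x⟫_ℂ‖ := by
  have hsq : ‖⟪A x, x⟫_ℂ‖ ^ 2 ≤
      (1 / √2 * ‖⟪(opAbs A + Complex.I • opAbs (adjoint A)) x, x⟫_ℂ‖) ^ 2 := by
    rw [mul_pow, sq_norm_inner_add_I_smul (.of_nonneg (CFC.sqrt_nonneg _))
      (.of_nonneg (CFC.sqrt_nonneg _)), div_pow, Real.sq_sqrt zero_le_two, one_pow]
    nlinarith [sq_nonneg ((⟪opAbs A x, x⟫_ℂ).re - (⟪opAbs (adjoint A) x, x⟫_ℂ).re),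
      sq_norm_inner_le_opAbs_mul_opAbs_adjoint A x]
  exact (pow_le_pow_iff_left₀ (norm_nonneg _) (by positivity) two_ne_zero).1 hsq

end

theorem berezin_abs_plus_I_abs_general
    {H : Type*} [NormedAddCommGroup H] [InnerProductSpace ℂ H] [CompleteSpace H]
    {Ω : Type*} (k : Ω → H) (hk : ∀ lam, ‖k lam‖ = 1)
    (A : H →L[ℂ] H) :
    ber k A ≤ (1 / Real.sqrt 2) * ber k (opAbs A + Complex.I • opAbs (adjoint A)) := by
  refine Real.iSup_le (fun lam => ?_) (mul_nonneg (by positivity) (ber_nonneg k _))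
  exact (norm_inner_le_inv_sqrt_two_mul A (k lam)).trans <| mul_le_mul_of_nonneg_left
    (norm_inner_le_ber (fun μ => (hk μ).le) _ lam) (by positivity)

theorem berezin_abs_plus_I_abs
    {H : Type*} [NormedAddCommGroup H] [InnerProductSpace ℂ H] [CompleteSpace H]
    {Ω : Type*} [Nonempty Ω] (k : Ω → H) (hk : ∀ lam, ‖k lam‖ = 1)
    (A : H →L[ℂ] H) :
    ber k A ≤ (1 / Real.sqrt 2) * ber k (opAbs A + Complex.I • opAbs (adjoint A)) :=
  berezin_abs_plus_I_abs_general k hk A
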